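/- The quantum walk intertwines the functional calculus of the Dirichlet transition operator: U'_M d_{+,M}* = d_{+,M}* exp(i·arccos(T'_M)) and U'_M d_{−,M}* = d_{−,M}* exp(−i·arccos(T'_M)) as operators from ℓ²(V') to ℓ²(A'). -/

import Mathlib

/- Setting: G' = (V', A') a connected locally finite graph, arcs = darts of a simple
graph `G`; `e.fst` = origin, `e.snd` = terminus, `e.symm` = reversed arc; `α` a weight
on arcs with `Σ_{a : o(a)=v} |α(a)|² = 1`, and `M` a set of marked vertices. ℓ²(A')
and ℓ²(V') are the `lp _ 2` spaces; the marked boundary operators and the shift are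
characterized by their pointwise formulas. -/

noncomputable section
open scoped ComplexConjugate ComplexInnerProductSpace Classical
open Complex Filter Topology ContinuousLinearMap

namespace GroverStmtB

/-- ℓ²(V') -/
abbrev lV (V : Type) : Type := lp (fun _ : V => ℂ) 2

/-- port: the self-adjoint continuous functional calculus on `lV W →L[ℂ] lV W`
(Mathlib's instance, which instance search no longer finds unaided). -/
instance instCFClV (W : Type) :
    ContinuousFunctionalCalculus ℝ (lV W →L[ℂ] lV W) IsSelfAdjoint :=
  IsSelfAdjoint.instContinuousFunctionalCalculus

variable {V : Type} (G : SimpleGraph V)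

/-- ℓ²(A') where A' is the set of symmetric arcs (darts) of `G`. -/
abbrev lA : Type := lp (fun _ : G.Dart => ℂ) 2

/-- the weight condition `Σ_{a : o(a)=v} |α(a)|² = 1` for every vertex `v`. -/
def IsWeight (α : G.Dart → ℂ) : Prop :=
  ∀ v : V, ∑' a : {a : G.Dart // a.fst = v}, ‖α a.1‖ ^ 2 = 1

/-- `(S'ψ)(e) = ψ(ē)` -/
def IsShift (S : lA G →L[ℂ] lA G) : Prop :=
  ∀ (ψ : lA G) (e : G.Dart), S ψ e = ψ e.symm

variable (α : G.Dart → ℂ) (M : Set V)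

/-- `(d_{T,M}ψ)(v) = Σ_{e : t(e)=v} α(ē)ψ(e)` for `v ∉ M`, `= 0` for `v ∈ M`. -/
def IsMarkedT (dTM : lA G →L[ℂ] lV V) : Prop :=
  (∀ (ψ : lA G) (v : V), v ∉ M →
      dTM ψ v = ∑' e : {e : G.Dart // e.snd = v}, α e.1.symm * ψ e.1) ∧
  (∀ (ψ : lA G) (v : V), v ∈ M → dTM ψ v = 0)

/-- `(d_{O,M}ψ)(v) = Σ_{e : o(e)=v} α(e)ψ(e)` for `v ∉ M`, `= 0` for `v ∈ M`. -/
def IsMarkedO (dOM : lA G →L[ℂ] lV V) : Prop :=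
  (∀ (ψ : lA G) (v : V), v ∉ M →
      dOM ψ v = ∑' e : {e : G.Dart // e.fst = v}, α e.1 * ψ e.1) ∧
  (∀ (ψ : lA G) (v : V), v ∈ M → dOM ψ v = 0)

/-- the Dirichlet transition operator `T'_M = d_{T,M} d_{O,M}*`. -/
def TM (dTM dOM : lA G →L[ℂ] lV V) : lV V →L[ℂ] lV V := dTM ∘L adjoint dOM

/-- `exp(s·i·arccos(T'_M))` via the continuous functional calculus for `T'_M`. -/
def expArc (dTM dOM : lA G →L[ℂ] lV V) (s : ℂ) : lV V →L[ℂ] lV V :=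
  NormedSpace.exp ((s * Complex.I) • cfc Real.arccos (TM G dTM dOM))

/-- `(2(1 − T'_M²))^(−1/2)` via the continuous functional calculus for `T'_M`. -/
def invSqrt (dTM dOM : lA G →L[ℂ] lV V) : lV V →L[ℂ] lV V :=
  cfc (fun x : ℝ => (Real.sqrt (2 * (1 - x ^ 2)))⁻¹) (TM G dTM dOM)

/-- `d_{±,M}* = (d_{T,M}* − d_{O,M}*·exp(±i·arccos T'_M))·(2(1−T'_M²))^(−1/2)`,
with `s = 1` for the `+` sign and `s = −1` for the `−` sign. -/
def dpmStar (dTM dOM : lA G →L[ℂ] lV V) (s : ℂ) : lV V →L[ℂ] lA G :=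
  (adjoint dTM - adjoint dOM ∘L expArc G dTM dOM s) ∘L invSqrt G dTM dOM

/-- the quantum walk `U'_M = S'(2 d_{T,M}* d_{T,M} − 1)` induced by the Dirichlet
random walk. -/
def UM (S : lA G →L[ℂ] lA G) (dTM : lA G →L[ℂ] lV V) : lA G →L[ℂ] lA G :=
  S ∘L ((2 : ℂ) • ((adjoint dTM) ∘L dTM) - 1)

/-!
Write `P = d_{T,M}*`, `Q = d_{O,M}*` and `T = T'_M`. The shift swaps `P` and `Q`, and the weight
condition makes `d_{T,M} d_{T,M}*` the identity off `M`, so `Q d_{T,M} P = Q`. Hence `U'_M` maps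
`P ↦ Q` and `Q ↦ 2QT − P`: on operators of the form `P − QE` it acts through the quadratic
`E² − 2TE + 1`, which vanishes at `E = exp(± i·arccos T)` because `e^{±iθ}` are the roots of
`z² − 2 cos θ · z + 1`. Therefore `U'_M (P − QE) = (P − QE) E`, and the normalising factor
`(2(1 − T²))^(−1/2)` is a function of `T`, so it commutes with `E`.
-/

theorem _root_.Complex.exp_mul_I_mul_self (w : ℂ) :
    Complex.exp (w * I) * Complex.exp (w * I) = 2 * (Complex.cos w * Complex.exp (w * I)) - 1 := by
  have h : Complex.exp (-w * I) * Complex.exp (w * I) = 1 := by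
    rw [← Complex.exp_add, neg_mul, neg_add_cancel, Complex.exp_zero]
  rw [Complex.cos]
  linear_combination -h

section CStarAlgebra

variable {A : Type*} [CStarAlgebra A] {a : A}

lemma _root_.IsSelfAdjoint.cos_arccos_re_of_mem_spectrum (ha : IsSelfAdjoint a) (hn : ‖a‖ ≤ 1)
    {z : ℂ} (hz : z ∈ spectrum ℂ a) : Complex.cos (Real.arccos z.re) = z := by
  rcases subsingleton_or_nontrivial A with _ | _
  · simp [spectrum.of_subsingleton] at hz
  have hre : |z.re| ≤ 1 := (abs_re_le_norm z).trans ((spectrum.norm_le_norm_of_mem hz).trans hn)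
  rw [← ofReal_cos, Real.cos_arccos (abs_le.mp hre).1 (abs_le.mp hre).2,
    ← ha.mem_spectrum_eq_re hz]

lemma _root_.IsSelfAdjoint.exp_smul_cfc_eq_cfc (ha : IsSelfAdjoint a) (c : ℂ) {f : ℝ → ℝ}
    (hf : Continuous f) :
    NormedSpace.exp (c • cfc f a) = cfc (fun z : ℂ => Complex.exp (c * (f z.re : ℂ))) a := by
  have hf' : Continuous fun z : ℂ => (f z.re : ℂ) := by fun_prop
  rw [cfc_real_eq_complex f ha, ← cfc_smul c _ a hf'.continuousOn,
    ← CFC.complex_exp_eq_normedSpace_exp (cfc_predicate _ a),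
    ← cfc_comp' Complex.exp _ a continuous_exp.continuousOn (by fun_prop) ha.isStarNormal]
  rfl

lemma _root_.IsSelfAdjoint.exp_arccos_mul_self (ha : IsSelfAdjoint a) (hn : ‖a‖ ≤ 1) {s : ℂ}
    (hs : s = 1 ∨ s = -1) :
    NormedSpace.exp ((s * I) • cfc Real.arccos a) *
        NormedSpace.exp ((s * I) • cfc Real.arccos a)
      = (2 : ℂ) • (a * NormedSpace.exp ((s * I) • cfc Real.arccos a)) - 1 := by
  rw [ha.exp_smul_cfc_eq_cfc _ Real.continuous_arccos]
  set g : ℂ → ℂ := fun z => Complex.exp (s * I * (Real.arccos z.re : ℂ)) with hg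
  have hgc : Continuous g := by fun_prop
  have hroot : (spectrum ℂ a).EqOn (fun z => g z * g z) (fun z => 2 * (z * g z) - 1) := by
    intro z hz
    have hcos : Complex.cos (s * Real.arccos z.re) = z := by
      rcases hs with rfl | rfl
      · rw [one_mul, ha.cos_arccos_re_of_mem_spectrum hn hz]
      · rw [neg_one_mul, Complex.cos_neg, ha.cos_arccos_re_of_mem_spectrum hn hz]
    have := Complex.exp_mul_I_mul_self (s * Real.arccos z.re)
    rw [hcos] at this
    simpa only [hg, mul_right_comm s I] using this
  calc cfc g a * cfc g a = cfc (fun z => g z * g z) a := (cfc_mul g g a).symm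
    _ = cfc (fun z => 2 * (z * g z) - 1) a := cfc_congr hroot
    _ = (2 : ℂ) • (a * cfc g a) - 1 := by
      rw [cfc_sub _ _ a, cfc_const_mul _ _ a, cfc_mul _ _ a, cfc_id' ℂ a ha.isStarNormal,
        cfc_const_one ℂ a ha.isStarNormal]

lemma _root_.commute_cfc_exp_smul_cfc (f g : ℝ → ℝ) (c : ℂ) (a : A) :
    Commute (cfc f a) (NormedSpace.exp (c • cfc g a)) :=
  ((cfc_commute_cfc f g a).smul_right c).exp_right

end CStarAlgebra

section Intertwining

variable {R X Y : Type*} [CommRing R] [TopologicalSpace X] [AddCommGroup X] [Module R X]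
  [IsTopologicalAddGroup X] [ContinuousConstSMul R X] [TopologicalSpace Y] [AddCommGroup Y]
  [Module R Y] [IsTopologicalAddGroup Y] [ContinuousConstSMul R Y]

theorem _root_.ContinuousLinearMap.comp_intertwines_of_mul_self_eq {U : X →L[R] X}
    {P Q : Y →L[R] X} {T E C : Y →L[R] Y} (hUP : U ∘L P = Q)
    (hUQ : U ∘L Q = (2 : R) • (Q ∘L T) - P) (hE : E ∘L E = (2 : R) • (T ∘L E) - 1)
    (hCE : C ∘L E = E ∘L C) :
    U ∘L ((P - Q ∘L E) ∘L C) = ((P - Q ∘L E) ∘L C) ∘L E := by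
  calc U ∘L ((P - Q ∘L E) ∘L C) = (U ∘L P - (U ∘L Q) ∘L E) ∘L C := by
        simp only [comp_sub, sub_comp, comp_assoc]
    _ = (P ∘L E - Q ∘L (E ∘L E)) ∘L C := by
        rw [hUP, hUQ, hE]
        simp only [comp_sub, sub_comp, comp_smul, smul_comp, comp_assoc, one_def, comp_id]
        abel
    _ = ((P - Q ∘L E) ∘L C) ∘L E := by
        simp only [sub_comp, comp_assoc, hCE]

end Intertwining

section MarkedIncidence

variable {ι V : Type} (M : Set V) (π : ι → V) (β : ι → ℂ)

/-- The common shape of `d_{T,M}` (with `π = t`, `β e = α ē`) and `d_{O,M}` (with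
`π = o`, `β = α`). -/
def IsMarkedIncidence (d : lp (fun _ : ι => ℂ) 2 →L[ℂ] lV V) : Prop :=
  (∀ (ψ : lp (fun _ : ι => ℂ) 2) (v : V), v ∉ M →
      d ψ v = ∑' i : {i : ι // π i = v}, β i.1 * ψ i.1) ∧
  (∀ (ψ : lp (fun _ : ι => ℂ) 2) (v : V), v ∈ M → d ψ v = 0)

variable {M π β} {d : lp (fun _ : ι => ℂ) 2 →L[ℂ] lV V}

lemma IsMarkedIncidence.apply_single (hd : IsMarkedIncidence M π β d) (i : ι) (v : V) :
    d (lp.single 2 i 1) v = if π i = v ∧ v ∉ M then β i else 0 := by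
  by_cases hv : v ∈ M
  · rw [hd.2 _ v hv, if_neg (fun h => h.2 hv)]
  rw [hd.1 _ v hv]
  by_cases hi : π i = v
  · rw [if_pos ⟨hi, hv⟩, tsum_eq_single ⟨i, hi⟩ fun j hj => ?_, lp.single_apply_self,
      mul_one]
    rw [lp.single_apply_ne _ _ _ (fun h => hj (Subtype.ext h)), mul_zero]
  · rw [if_neg (fun h => hi h.1), tsum_congr fun j => ?_, tsum_zero]
    rw [lp.single_apply_ne _ _ _ (fun h => hi (by rw [← h]; exact j.2)), mul_zero]

lemma IsMarkedIncidence.adjoint_apply (hd : IsMarkedIncidence M π β d) (f : lV V) (i : ι) :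
    adjoint d f i = if π i ∈ M then 0 else conj (β i) * f (π i) := by
  have h := adjoint_inner_right d (lp.single 2 i (1 : ℂ)) f
  rw [lp.inner_single_left, lp.inner_eq_tsum] at h
  simp only [RCLike.inner_apply, map_one, mul_one] at h
  rw [h, tsum_eq_single (π i) fun v hv => by
    rw [hd.apply_single, if_neg (fun h => hv h.1.symm), map_zero, mul_zero]]
  by_cases hi : π i ∈ M <;> simp [hd.apply_single, hi, mul_comm]

lemma IsMarkedIncidence.apply_adjoint_apply (hd : IsMarkedIncidence M π β d) (f : lV V) {v : V}
    (hv : v ∉ M) :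
    d (adjoint d f) v = ((∑' i : {i : ι // π i = v}, ‖β i.1‖ ^ 2 : ℝ) : ℂ) * f v := by
  rw [hd.1 _ v hv, Complex.ofReal_tsum, ← tsum_mul_right]
  refine tsum_congr fun i => ?_
  rw [hd.adjoint_apply, i.2, if_neg hv, ← mul_assoc, Complex.mul_conj', Complex.ofReal_pow]

end MarkedIncidence

lemma _root_.SimpleGraph.tsum_snd_eq_tsum_fst_symm {V X : Type*} [AddCommMonoid X]
    [TopologicalSpace X] (G : SimpleGraph V) (v : V) (f : G.Dart → X) :
    ∑' e : {e : G.Dart // e.snd = v}, f e = ∑' e : {e : G.Dart // e.fst = v}, f e.1.symm :=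
  (Equiv.tsum_eq (Equiv.subtypeEquiv
    (Function.Involutive.toPerm _ SimpleGraph.Dart.symm_involutive) fun _ => Iff.rfl)
    fun e => f e.1).symm

section Walk

variable {V : Type} {G : SimpleGraph V} {α : G.Dart → ℂ} {M : Set V}
  {dTM dOM : lA G →L[ℂ] lV V} {S : lA G →L[ℂ] lA G}

lemma IsMarkedT.isMarkedIncidence (h : IsMarkedT G α M dTM) :
    IsMarkedIncidence M (fun e : G.Dart => e.snd) (fun e => α e.symm) dTM :=
  h

lemma IsMarkedO.isMarkedIncidence (h : IsMarkedO G α M dOM) :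
    IsMarkedIncidence M (fun e : G.Dart => e.fst) α dOM :=
  h

lemma shift_comp_adjoint_dT (hS : IsShift G S) (hdTM : IsMarkedT G α M dTM)
    (hdOM : IsMarkedO G α M dOM) : S ∘L adjoint dTM = adjoint dOM := by
  ext f e
  rw [comp_apply, hS, hdTM.isMarkedIncidence.adjoint_apply,
    hdOM.isMarkedIncidence.adjoint_apply, SimpleGraph.Dart.symm_symm]
  rfl

lemma shift_comp_adjoint_dO (hS : IsShift G S) (hdTM : IsMarkedT G α M dTM)
    (hdOM : IsMarkedO G α M dOM) : S ∘L adjoint dOM = adjoint dTM := by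
  ext f e
  rw [comp_apply, hS, hdTM.isMarkedIncidence.adjoint_apply,
    hdOM.isMarkedIncidence.adjoint_apply]
  rfl

lemma dT_apply_adjoint_dT_apply (hα : IsWeight G α) (hdTM : IsMarkedT G α M dTM) (f : lV V)
    {v : V} (hv : v ∉ M) : dTM (adjoint dTM f) v = f v := by
  rw [hdTM.isMarkedIncidence.apply_adjoint_apply f hv,
    G.tsum_snd_eq_tsum_fst_symm v fun e => ‖α e.symm‖ ^ 2]
  simp only [SimpleGraph.Dart.symm_symm, hα v, Complex.ofReal_one, one_mul]

lemma adjoint_dO_comp_dT_comp_adjoint_dT (hα : IsWeight G α) (hdTM : IsMarkedT G α M dTM)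
    (hdOM : IsMarkedO G α M dOM) : adjoint dOM ∘L (dTM ∘L adjoint dTM) = adjoint dOM := by
  ext f e
  rw [comp_apply, comp_apply, hdOM.isMarkedIncidence.adjoint_apply,
    hdOM.isMarkedIncidence.adjoint_apply]
  split_ifs with he
  · rfl
  · rw [dT_apply_adjoint_dT_apply hα hdTM f he]

lemma dO_comp_adjoint_dT (hdTM : IsMarkedT G α M dTM) (hdOM : IsMarkedO G α M dOM) :
    dOM ∘L adjoint dTM = dTM ∘L adjoint dOM := by
  ext f v
  rw [comp_apply, comp_apply]
  by_cases hv : v ∈ M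
  · rw [hdOM.2 _ v hv, hdTM.2 _ v hv]
  rw [hdOM.1 _ v hv, hdTM.1 _ v hv,
    G.tsum_snd_eq_tsum_fst_symm v fun e => α e.symm * adjoint dOM f e]
  refine tsum_congr fun e => ?_
  rw [hdTM.isMarkedIncidence.adjoint_apply, hdOM.isMarkedIncidence.adjoint_apply,
    SimpleGraph.Dart.symm_symm]
  rfl

lemma isSelfAdjoint_TM (hdTM : IsMarkedT G α M dTM) (hdOM : IsMarkedO G α M dOM) :
    IsSelfAdjoint (TM G dTM dOM) := by
  rw [isSelfAdjoint_iff', TM, adjoint_comp, adjoint_adjoint]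
  exact dO_comp_adjoint_dT hdTM hdOM

lemma UM_comp_adjoint_dT (hα : IsWeight G α) (hS : IsShift G S) (hdTM : IsMarkedT G α M dTM)
    (hdOM : IsMarkedO G α M dOM) : UM G S dTM ∘L adjoint dTM = adjoint dOM := by
  have hST := shift_comp_adjoint_dT hS hdTM hdOM
  calc UM G S dTM ∘L adjoint dTM
      = (2 : ℂ) • ((S ∘L adjoint dTM) ∘L (dTM ∘L adjoint dTM)) - S ∘L adjoint dTM := by
        simp only [UM, sub_comp, smul_comp, comp_sub, comp_smul, comp_assoc, one_def, id_comp]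
    _ = adjoint dOM := by
        rw [hST, adjoint_dO_comp_dT_comp_adjoint_dT hα hdTM hdOM, two_smul, add_sub_cancel_right]

lemma UM_comp_adjoint_dO (hS : IsShift G S) (hdTM : IsMarkedT G α M dTM)
    (hdOM : IsMarkedO G α M dOM) :
    UM G S dTM ∘L adjoint dOM = (2 : ℂ) • (adjoint dOM ∘L TM G dTM dOM) - adjoint dTM := by
  simp only [UM, TM, sub_comp, smul_comp, comp_sub, comp_smul, comp_assoc, one_def, id_comp]
  rw [← comp_assoc, shift_comp_adjoint_dT hS hdTM hdOM, shift_comp_adjoint_dO hS hdTM hdOM]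

end Walk

/-- `U'_M d_{+,M}* = d_{+,M}* exp(i·arccos T'_M)` and
`U'_M d_{−,M}* = d_{−,M}* exp(−i·arccos T'_M)`. -/
theorem statement15 {V : Type} (G : SimpleGraph V)
    [∀ v : V, Fintype (G.neighborSet v)] (hconn : G.Connected)
    (α : G.Dart → ℂ) (M : Set V) (hα : IsWeight G α)
    (dTM dOM : lA G →L[ℂ] lV V) (S : lA G →L[ℂ] lA G)
    (hdTM : IsMarkedT G α M dTM) (hdOM : IsMarkedO G α M dOM) (hS : IsShift G S)
    -- σ(T'_M) ⊆ (−1, 1), equivalently ‖T'_M‖ < 1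
    (hT : ‖TM G dTM dOM‖ < 1) :
    (UM G S dTM ∘L dpmStar G dTM dOM 1 =
      dpmStar G dTM dOM 1 ∘L expArc G dTM dOM 1) ∧
    (UM G S dTM ∘L dpmStar G dTM dOM (-1) =
      dpmStar G dTM dOM (-1) ∘L expArc G dTM dOM (-1)) := by
  have hTsa := isSelfAdjoint_TM hdTM hdOM
  have key : ∀ s : ℂ, s = 1 ∨ s = -1 →
      UM G S dTM ∘L dpmStar G dTM dOM s = dpmStar G dTM dOM s ∘L expArc G dTM dOM s :=
    fun s hs => comp_intertwines_of_mul_self_eq (UM_comp_adjoint_dT hα hS hdTM hdOM)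
      (UM_comp_adjoint_dO hS hdTM hdOM) (hTsa.exp_arccos_mul_self hT.le hs)
      (commute_cfc_exp_smul_cfc _ _ _ _).eq
  exact ⟨key 1 (.inl rfl), key (-1) (.inr rfl)⟩

end GroverStmtB
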